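/- For every oriented word u of rank k ≥ 2, the set P_u = {g ∈ F_k : τ_u(g) > 0} is the positive cone of a left order on F_k: P_u is closed under multiplication, and F_k is the disjoint union of P_u^{-1}, {e}, and P_u. -/

import Mathlib

open FreeGroup

/-- A letter over the alphabet `{a_1,...,a_k, a_1⁻¹,...,a_k⁻¹}`:
`(i, true)` is the positive letter `a_i`, `(i, false)` is `a_i⁻¹`. -/
abbrev Letter (k : ℕ) := Fin k × Bool

/-- Formal inverse of a letter. -/
def invL {k : ℕ} (x : Letter k) : Letter k := (x.1, !x.2)

/-- An oriented word of rank `k`: each of the `2k` letters appears exactly once. -/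
def IsOriented {k : ℕ} (u : List (Letter k)) : Prop :=
  u.Nodup ∧ ∀ x : Letter k, x ∈ u

/-- `x` occurs to the left of `y` in `u`. -/
def leftOf {k : ℕ} (u : List (Letter k)) (x y : Letter k) : Prop :=
  u.idxOf x < u.idxOf y

instance {k : ℕ} (u : List (Letter k)) (x y : Letter k) : Decidable (leftOf u x y) :=
  inferInstanceAs (Decidable (_ < _))

/-- Number of occurrences of the two-letter word `xy` as a contiguous subword of `L`. -/
def cnt {k : ℕ} (L : List (Letter k)) (x y : Letter k) : ℕ :=
  (L.zip L.tail).count (x, y)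

/-- The case transition weight `α_u`, on a reduced word `L`. -/
noncomputable def alphaW {k : ℕ} (u L : List (Letter k)) : ℝ :=
  (∑ a : Fin k, ∑ b : Fin k,
      if leftOf u (a, false) (b, false) then (cnt L (a, true) (b, false) : ℝ) else 0)
  - ∑ a : Fin k, ∑ b : Fin k,
      if leftOf u (a, true) (b, true) then (cnt L (b, false) (a, true) : ℝ) else 0

/-- The letter transition weight `β_u`, on a reduced word `L`. -/
noncomputable def betaW {k : ℕ} (u L : List (Letter k)) : ℝ :=
  (∑ a : Fin k, ∑ b : Fin k,
      if leftOf u (a, false) (b, true) then (cnt L (a, true) (b, true) : ℝ) else 0)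
  - ∑ a : Fin k, ∑ b : Fin k,
      if leftOf u (a, false) (b, true) then (cnt L (b, false) (a, false) : ℝ) else 0

/-- The last letter weight `ω`, on a reduced word `L`. -/
noncomputable def omegaW {k : ℕ} (L : List (Letter k)) : ℝ :=
  match L.getLast? with
  | none => 0
  | some x => if x.2 then 1 / 2 else -(1 / 2)

/-- The weight `τ_u` induced by an oriented word `u`, evaluated on the reduced form. -/
noncomputable def tau {k : ℕ} (u : List (Letter k)) (g : FreeGroup (Fin k)) : ℝ :=
  alphaW u g.toWord + betaW u g.toWord + omegaW g.toWord

/-- The weight contribution `wtc_u` of a reduced two-letter word `xy`. -/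
noncomputable def wtc {k : ℕ} (u : List (Letter k)) (x y : Letter k) : ℝ :=
  if x.2 then (if leftOf u (x.1, false) y then 1 else 0)
  else (if leftOf u y (x.1, true) then -1 else 0)

/-- The inverse word of `u`. -/
def invWord {k : ℕ} (u : List (Letter k)) : List (Letter k) := (u.map invL).reverse

/-- A function `τ : G → ℝ` with small relative defect. -/
def SmallRelDefect {G : Type*} [Group G] (τ : G → ℝ) : Prop :=
  τ 1 = 0 ∧ ∀ g h : G, (g ≠ 1 ∨ h ≠ 1) → |τ g + τ h - τ (g * h)| < |τ g| + |τ h|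

/-!
Write `j(x, y) = wtc_u(x, y) - ω(x)` for the weight of a junction `xy`. On a reduced word, `τ_u`
is the sum of `ω` over the letters plus the sum of `j` over the junctions, and because `u` orders
the letters linearly, `j(y⁻¹, x⁻¹) = -j(x, y)`; hence `τ_u(g⁻¹) = -τ_u(g)`. All values of `wtc_u`
are integers, so `τ_u(g) ∈ ℤ + 1/2` for `g ≠ 1`: thus `τ_u(g) ≠ 0`, and `τ_u(g) > 0` forces
`τ_u(g) ≥ 1/2`. If `g = p m⁻¹` and `h = m q` as reduced words with `gh = pq` reduced, then
`τ_u(g) + τ_u(h) - τ_u(gh) = j(x, d⁻¹) + j(d, y) - j(x, y)` for the last letters `x` of `p` and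
`d` of `m` and the first letter `y` of `q`; transitivity of the order bounds this by `1/2`, and
`|j| ≤ 1/2` covers the cases with an empty piece. Hence `τ_u(gh) ≥ 1/2` when `g, h ∈ P_u`.
-/

lemma List.sum_count_smul_eq_sum_map {α M : Type*} [BEq α] [LawfulBEq α] [Fintype α]
    [AddCommMonoid M] (l : List α) (f : α → M) : ∑ a, l.count a • f a = (l.map f).sum := by
  classical
  induction l with
  | nil => simp
  | cons b t ih => simp [List.count_cons, add_smul, Finset.sum_add_distrib, ih, add_comm]

namespace FreeGroup

variable {α : Type*} [DecidableEq α]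

lemma exists_reduce_append_eq {w v : List (α × Bool)} (hw : IsReduced w) (hv : IsReduced v) :
    ∃ p m q, w = p ++ invRev m ∧ v = m ++ q ∧ reduce (w ++ v) = p ++ q := by
  induction w using List.reverseRecOn generalizing v with
  | nil => exact ⟨[], [], v, rfl, rfl, hv.reduce_eq⟩
  | append_singleton w x ih =>
    rcases v with _ | ⟨y, v⟩
    · exact ⟨w ++ [x], [], [], by simp [invRev], rfl, by simpa using hw.reduce_eq⟩
    by_cases hxy : x.1 = y.1 → x.2 = y.2
    · refine ⟨w ++ [x], [], y :: v, by simp [invRev], rfl, IsReduced.reduce_eq ?_⟩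
      refine IsReduced.append_overlap (L₂ := [x]) hw ?_ (List.cons_ne_nil _ _)
      exact isReduced_cons_cons.2 ⟨hxy, hv⟩
    · obtain ⟨p, m, q, rfl, rfl, hpq⟩ :=
        ih (hw.infix ⟨[], [x], rfl⟩) (hv.infix (L₁ := v) ⟨[y], [], by simp⟩)
      obtain rfl : y = (x.1, !x.2) := by
        obtain ⟨a, s⟩ := x
        obtain ⟨b, t⟩ := y
        cases s <;> cases t <;> simp_all
      refine ⟨p, (x.1, !x.2) :: m, q, by simp [invRev], rfl, ?_⟩
      rw [← hpq]
      exact reduce.Step.eq (by simpa using Red.Step.not (L₁ := p ++ invRev m) (L₂ := m ++ q))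

end FreeGroup

namespace TauWeight

variable {k : ℕ} {u : List (Letter k)}

lemma leftOf_asymm {x y : Letter k} (h : leftOf u x y) : ¬ leftOf u y x :=
  Nat.lt_asymm h

lemma leftOf_iff_not_leftOf (hu : IsOriented u) {x y : Letter k} (h : x ≠ y) :
    leftOf u x y ↔ ¬ leftOf u y x :=
  ⟨leftOf_asymm, fun hyx =>
    (Nat.lt_or_gt_of_ne fun e => h ((List.idxOf_inj (hu.2 x)).1 e)).resolve_right hyx⟩

noncomputable def letterWeight (x : Letter k) : ℝ := if x.2 then 1 / 2 else -(1 / 2)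

lemma letterWeight_invL (x : Letter k) : letterWeight (invL x) = -letterWeight x := by
  cases x with | mk a s => cases s <;> simp [letterWeight, invL]

variable (u) in
noncomputable def junctionWeight (x y : Letter k) : ℝ := wtc u x y - letterWeight x

lemma junctionWeight_le_half (x y : Letter k) : junctionWeight u x y ≤ 1 / 2 := by
  unfold junctionWeight wtc letterWeight; split_ifs <;> norm_num

lemma neg_half_le_junctionWeight (x y : Letter k) : -(1 / 2) ≤ junctionWeight u x y := by
  unfold junctionWeight wtc letterWeight; split_ifs <;> norm_num

lemma junctionWeight_invL (hu : IsOriented u) {x y : Letter k} (hxy : x.1 = y.1 → x.2 = y.2) :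
    junctionWeight u (invL y) (invL x) = -junctionWeight u x y := by
  obtain ⟨a, s⟩ := x
  obtain ⟨b, t⟩ := y
  cases s <;> cases t <;> simp only [junctionWeight, wtc, letterWeight, invL] at hxy ⊢ <;>
    norm_num at hxy ⊢ <;> split_ifs <;> norm_num <;> simp_all [leftOf_iff_not_leftOf hu]

lemma junctionWeight_add_le (hu : IsOriented u) (x : Letter k) {d y : Letter k}
    (hdy : d.1 = y.1 → d.2 = y.2) :
    junctionWeight u x (invL d) + junctionWeight u d y ≤ junctionWeight u x y + 1 / 2 := by
  -- `wtc u d y` compares `y` with `d⁻¹` in `u`, and `y ≠ d⁻¹`.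
  have hy : u.idxOf y ≠ u.idxOf (invL d) := fun e =>
    by simp_all [(List.idxOf_inj (hu.2 y)).1 e, invL]
  obtain ⟨a, s⟩ := x
  obtain ⟨b, t⟩ := d
  cases s <;> cases t <;>
    simp only [junctionWeight, wtc, letterWeight, invL, Bool.not_true, Bool.not_false] at hy ⊢ <;>
    split_ifs <;> norm_num <;> simp only [leftOf] at * <;> omega

variable (u) in
noncomputable def glueWeight : Option (Letter k) → Option (Letter k) → ℝ
  | some x, some y => junctionWeight u x y
  | none, _ => 0
  | some _, none => 0

lemma glueWeight_map_invL (hu : IsOriented u) {a b : Option (Letter k)}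
    (hab : ∀ x ∈ a, ∀ y ∈ b, x.1 = y.1 → x.2 = y.2) :
    glueWeight u (b.map invL) (a.map invL) = -glueWeight u a b := by
  rcases a with _ | x <;> rcases b with _ | y <;> simp only [glueWeight, Option.map, neg_zero]
  exact junctionWeight_invL hu (hab x rfl y rfl)

lemma glueWeight_add_le (hu : IsOriented u) (a : Option (Letter k)) {b c : Option (Letter k)}
    (hbc : ∀ d ∈ b, ∀ y ∈ c, d.1 = y.1 → d.2 = y.2) :
    glueWeight u a (b.map invL) + glueWeight u b c ≤ glueWeight u a c + 1 / 2 := by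
  rcases a with _ | x <;> rcases b with _ | d <;> rcases c with _ | y <;>
    simp only [glueWeight, Option.map] <;> norm_num
  · exact junctionWeight_le_half d y
  · linarith [neg_half_le_junctionWeight (u := u) x y]
  · exact junctionWeight_le_half x (invL d)
  · exact junctionWeight_add_le hu x (hbc d rfl y rfl)

variable (u) in
noncomputable def wordWeight : List (Letter k) → ℝ
  | [] => 0
  | x :: t => letterWeight x + glueWeight u (some x) t.head? + wordWeight t

lemma wordWeight_append (L₁ L₂ : List (Letter k)) :
    wordWeight u (L₁ ++ L₂) =
      wordWeight u L₁ + glueWeight u L₁.getLast? L₂.head? + wordWeight u L₂ := by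
  induction L₁ with
  | nil => simp [wordWeight, glueWeight]
  | cons x t ih =>
    rw [List.cons_append, wordWeight, wordWeight, ih]
    rcases t with _ | ⟨y, s⟩
    · simp [glueWeight, wordWeight]
    · simp only [List.cons_append, List.head?_cons, List.getLast?_cons_cons]
      ring

lemma getLast?_invRev (L : List (Letter k)) :
    (FreeGroup.invRev L).getLast? = L.head?.map invL := by
  simp [FreeGroup.invRev]
  rfl

lemma head?_invRev (L : List (Letter k)) :
    (FreeGroup.invRev L).head? = L.getLast?.map invL := by
  simp [FreeGroup.invRev]
  rfl

lemma wordWeight_invRev (hu : IsOriented u) {L : List (Letter k)} (hL : FreeGroup.IsReduced L) :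
    wordWeight u (FreeGroup.invRev L) = -wordWeight u L := by
  induction L with
  | nil => simp [FreeGroup.invRev, wordWeight]
  | cons x t ih =>
    rw [FreeGroup.IsReduced, List.isChain_cons] at hL
    have hglue := glueWeight_map_invL hu (a := some x) (b := t.head?) (by simpa using hL.1)
    have hx : FreeGroup.invRev [x] = [invL x] := rfl
    rw [FreeGroup.invRev_cons, hx, wordWeight_append, ih hL.2, getLast?_invRev]
    simp only [Option.map_some, List.head?_cons, List.head?_nil, wordWeight, glueWeight,
      letterWeight_invL] at hglue ⊢
    linarith

lemma sum_zip_tail_wtc_add_omegaW (L : List (Letter k)) :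
    ((L.zip L.tail).map fun p => wtc u p.1 p.2).sum + omegaW L = wordWeight u L := by
  induction L with
  | nil => simp [wordWeight, omegaW]
  | cons x t ih =>
    rcases t with _ | ⟨y, s⟩
    · simp [wordWeight, glueWeight, omegaW, letterWeight]
    · simp only [List.tail_cons, List.zip_cons_cons, List.map_cons, List.sum_cons] at ih ⊢
      rw [omegaW, List.getLast?_cons_cons, ← omegaW, add_assoc, ih]
      simp only [wordWeight, List.head?_cons, glueWeight, junctionWeight]
      ring

lemma alphaW_add_betaW (L : List (Letter k)) :
    alphaW u L + betaW u L = ((L.zip L.tail).map fun p => wtc u p.1 p.2).sum := by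
  rw [← List.sum_count_smul_eq_sum_map]
  have ite_neg_zero (c : Prop) [Decidable c] (t : ℝ) :
      (if c then -t else 0) = -(if c then t else 0) := by split_ifs <;> simp
  simp only [alphaW, betaW, cnt, Fintype.sum_prod_type, Fintype.sum_bool, wtc, nsmul_eq_mul,
    mul_ite, mul_one, mul_zero, mul_neg, if_true, if_false, Bool.false_eq_true, ite_neg_zero,
    Finset.sum_neg_distrib, Finset.sum_add_distrib]
  -- `α_u` and `β_u` index the pairs `b⁻¹ a`, `b⁻¹ a⁻¹` by `(a, b)`; `wtc` by the first letter.
  rw [Finset.sum_comm (γ := Fin k) (f := fun a b => if leftOf u (a, true) (b, true)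
      then ((L.zip L.tail).count ((b, false), a, true) : ℝ) else 0),
    Finset.sum_comm (γ := Fin k) (f := fun a b => if leftOf u (a, false) (b, true)
      then ((L.zip L.tail).count ((b, false), a, false) : ℝ) else 0)]
  ring

lemma wordWeight_add_le (hu : IsOriented u) {w v : List (Letter k)} (hw : FreeGroup.IsReduced w)
    (hv : FreeGroup.IsReduced v) :
    wordWeight u w + wordWeight u v ≤ wordWeight u (FreeGroup.reduce (w ++ v)) + 1 / 2 := by
  obtain ⟨p, m, q, rfl, rfl, hpq⟩ := FreeGroup.exists_reduce_append_eq hw hv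
  have hmq : ∀ d ∈ m.getLast?, ∀ y ∈ q.head?, d.1 = y.1 → d.2 = y.2 :=
    (List.isChain_append.1 hv).2.2
  rw [hpq, wordWeight_append, wordWeight_append, wordWeight_append, head?_invRev,
    wordWeight_invRev hu (hv.infix ⟨[], q, rfl⟩)]
  linarith [glueWeight_add_le hu p.getLast? hmq]

lemma exists_wordWeight_eq_int_add_half {L : List (Letter k)} (hL : L ≠ []) :
    ∃ z : ℤ, wordWeight u L = z + 1 / 2 := by
  induction L with
  | nil => exact absurd rfl hL
  | cons x t ih =>
    rcases t with _ | ⟨y, s⟩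
    · rcases x with ⟨a, _ | _⟩
      · exact ⟨-1, by simp [wordWeight, glueWeight, letterWeight]; norm_num⟩
      · exact ⟨0, by simp [wordWeight, glueWeight, letterWeight]⟩
    · obtain ⟨z, hz⟩ := ih (List.cons_ne_nil _ _)
      have hwtc : ∃ n : ℤ, wtc u x y = n := by
        unfold wtc; split_ifs
        exacts [⟨1, by simp⟩, ⟨0, by simp⟩, ⟨-1, by simp⟩, ⟨0, by simp⟩]
      obtain ⟨n, hn⟩ := hwtc
      refine ⟨n + z, ?_⟩
      rw [wordWeight, List.head?_cons, glueWeight, junctionWeight, hn, hz]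
      push_cast
      ring

lemma tau_eq_wordWeight (g : FreeGroup (Fin k)) : tau u g = wordWeight u g.toWord := by
  rw [tau, alphaW_add_betaW, sum_zip_tail_wtc_add_omegaW]

lemma tau_one : tau u 1 = 0 := by
  rw [tau_eq_wordWeight, FreeGroup.toWord_one, wordWeight]

lemma tau_inv (hu : IsOriented u) (g : FreeGroup (Fin k)) : tau u g⁻¹ = -tau u g := by
  rw [tau_eq_wordWeight, tau_eq_wordWeight, FreeGroup.toWord_inv,
    wordWeight_invRev hu FreeGroup.isReduced_toWord]

lemma tau_add_tau_le (hu : IsOriented u) (g h : FreeGroup (Fin k)) :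
    tau u g + tau u h ≤ tau u (g * h) + 1 / 2 := by
  simpa only [tau_eq_wordWeight, FreeGroup.toWord_mul] using
    wordWeight_add_le hu FreeGroup.isReduced_toWord FreeGroup.isReduced_toWord

lemma exists_tau_eq_int_add_half {g : FreeGroup (Fin k)} (hg : g ≠ 1) :
    ∃ z : ℤ, tau u g = z + 1 / 2 := by
  rw [tau_eq_wordWeight]
  exact exists_wordWeight_eq_int_add_half (mt FreeGroup.toWord_eq_nil_iff.1 hg)

lemma tau_ne_zero {g : FreeGroup (Fin k)} (hg : g ≠ 1) : tau u g ≠ 0 := by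
  obtain ⟨z, hz⟩ := exists_tau_eq_int_add_half (u := u) hg
  rw [hz]
  intro h
  have : (2 * z + 1 : ℤ) = 0 := by exact_mod_cast (by linarith : (2 * z + 1 : ℝ) = 0)
  omega

lemma half_le_tau {g : FreeGroup (Fin k)} (hg : 0 < tau u g) : 1 / 2 ≤ tau u g := by
  have hg1 : g ≠ 1 := by rintro rfl; rw [tau_one] at hg; exact hg.false
  obtain ⟨z, hz⟩ := exists_tau_eq_int_add_half (u := u) hg1
  rw [hz] at hg ⊢
  have : (-1 : ℤ) < z := by exact_mod_cast (by linarith : (-1 : ℝ) < z)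
  have : (0 : ℝ) ≤ z := by exact_mod_cast (by omega : (0 : ℤ) ≤ z)
  linarith

end TauWeight

open TauWeight in
theorem stmt9_general {k : ℕ} (u : List (Letter k)) (hu : IsOriented u) :
    (∀ g h : FreeGroup (Fin k), 0 < tau u g → 0 < tau u h → 0 < tau u (g * h))
    ∧ ∀ g : FreeGroup (Fin k),
        (0 < tau u g ∧ g ≠ 1 ∧ ¬ 0 < tau u g⁻¹)
        ∨ (g = 1 ∧ ¬ 0 < tau u g ∧ ¬ 0 < tau u g⁻¹)
        ∨ (0 < tau u g⁻¹ ∧ g ≠ 1 ∧ ¬ 0 < tau u g) := by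
  refine ⟨fun g h hg hh => ?_, fun g => ?_⟩
  · linarith [half_le_tau hg, half_le_tau hh, tau_add_tau_le hu g h]
  · rcases eq_or_ne g 1 with rfl | hg
    · simp [tau_one]
    rw [tau_inv hu]
    rcases (tau_ne_zero (u := u) hg).lt_or_gt with hneg | hpos
    · exact Or.inr (Or.inr ⟨by linarith, hg, by linarith⟩)
    · exact Or.inl ⟨hpos, hg, by linarith⟩

theorem stmt9 {k : ℕ} (hk : 2 ≤ k) (u : List (Letter k)) (hu : IsOriented u) :
    (∀ g h : FreeGroup (Fin k), 0 < tau u g → 0 < tau u h → 0 < tau u (g * h))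
    ∧ ∀ g : FreeGroup (Fin k),
        (0 < tau u g ∧ g ≠ 1 ∧ ¬ 0 < tau u g⁻¹)
        ∨ (g = 1 ∧ ¬ 0 < tau u g ∧ ¬ 0 < tau u g⁻¹)
        ∨ (0 < tau u g⁻¹ ∧ g ≠ 1 ∧ ¬ 0 < tau u g) :=
  stmt9_general u hu
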